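/- Every Lie algebra homomorphism ξ of sol (basis X₁,X₂,X₃, brackets [X₃,X₁]=X₁, [X₃,X₂]=−X₂) has, in the basis (X₁,X₂,X₃), one of the matrix forms: rows ((0,0,a),(0,0,b),(0,0,γ)); rows ((α,0,a),(0,β,b),(0,0,1)); or rows ((0,β,a),(α,0,b),(0,0,−1)). -/

import Mathlib

/-- The bracket of `sol`: `[X₃,X₁] = X₁`, `[X₃,X₂] = −X₂`. -/
def brS (u v : Fin 3 → ℝ) : Fin 3 → ℝ :=
  ![u 2 * v 0 - u 0 * v 2, u 1 * v 2 - u 2 * v 1, 0]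

/-! A homomorphism `ξ` maps `X₁` and `X₂` to eigenvectors of `ad (ξ X₃)` with eigenvalues `1`
and `−1`, or to `0`. Brackets land in the derived algebra `span {X₁, X₂}`, on which
`ad (ξ X₃)` acts as `diag (γ, −γ)`, `γ` being the `X₃`-coordinate of `ξ X₃`. Hence
`ξ X₁ = ξ X₂ = 0` unless `γ = ±1`; for `γ = 1` they stay on their own axes, for `γ = −1` they
are swapped. -/

theorem brS_single_two_single_zero :
    brS (Pi.single 2 1) (Pi.single 0 1) = Pi.single 0 1 := by
  ext i; fin_cases i <;> simp [brS]

theorem brS_single_two_single_one :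
    brS (Pi.single 2 1) (Pi.single 1 1) = -Pi.single 1 1 := by
  ext i; fin_cases i <;> simp [brS]

theorem brS_eq_smul_iff {u w : Fin 3 → ℝ} {c : ℝ} (hc : c ≠ 0) :
    brS u w = c • w ↔ w 2 = 0 ∧ (u 2 - c) * w 0 = 0 ∧ (u 2 + c) * w 1 = 0 := by
  constructor
  · intro h
    have hw2 : w 2 = 0 := by simpa [brS, hc] using (congrFun h 2).symm
    have h0 := congrFun h 0
    have h1 := congrFun h 1
    simp only [brS, hw2, Matrix.cons_val, Pi.smul_apply, smul_eq_mul] at h0 h1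
    exact ⟨hw2, by linear_combination h0, by linear_combination -h1⟩
  · rintro ⟨hw2, h0, h1⟩
    ext i
    fin_cases i <;> simp [brS, hw2, -mul_eq_mul_right_iff]
    · linear_combination h0
    · linear_combination -h1

/-- Every Lie algebra endomorphism of `sol` has in the basis `(X₁,X₂,X₃)` one of the
forms: rows `((0,0,a),(0,0,b),(0,0,γ))`; rows `((α,0,a),(0,β,b),(0,0,1))`;
or rows `((0,β,a),(α,0,b),(0,0,−1))`. -/
theorem sol_homomorphism_form
    (M : Matrix (Fin 3) (Fin 3) ℝ)
    (hM : ∀ u v, M.mulVec (brS u v) = brS (M.mulVec u) (M.mulVec v)) :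
    (∀ i, M i 0 = 0 ∧ M i 1 = 0) ∨
    (M 2 0 = 0 ∧ M 2 1 = 0 ∧ M 2 2 = 1 ∧ M 0 1 = 0 ∧ M 1 0 = 0) ∨
    (M 2 0 = 0 ∧ M 2 1 = 0 ∧ M 2 2 = -1 ∧ M 0 0 = 0 ∧ M 1 1 = 0) := by
  have hX₁ : brS (M.col 2) (M.col 0) = (1 : ℝ) • M.col 0 := by
    simpa [Matrix.mulVec_single_one, brS_single_two_single_zero]
      using (hM (Pi.single 2 1) (Pi.single 0 1)).symm
  have hX₂ : brS (M.col 2) (M.col 1) = (-1 : ℝ) • M.col 1 := by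
    simpa [Matrix.mulVec_neg, Matrix.mulVec_single_one, brS_single_two_single_one]
      using (hM (Pi.single 2 1) (Pi.single 1 1)).symm
  obtain ⟨h20, h00, h10⟩ := (brS_eq_smul_iff one_ne_zero).1 hX₁
  obtain ⟨h21, h01, h11⟩ := (brS_eq_smul_iff (neg_ne_zero.2 one_ne_zero)).1 hX₂
  simp only [Matrix.col_apply, sub_neg_eq_add, ← sub_eq_add_neg] at h20 h00 h10 h21 h01 h11
  rcases eq_or_ne (M 2 2) 1 with hγ | hγ_ne_one
  · refine Or.inr (Or.inl ⟨h20, h21, hγ, ?_, ?_⟩)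
    · exact (mul_eq_zero.1 h01).resolve_left (by rw [hγ]; norm_num)
    · exact (mul_eq_zero.1 h10).resolve_left (by rw [hγ]; norm_num)
  rcases eq_or_ne (M 2 2) (-1) with hγ | hγ_ne_neg_one
  · refine Or.inr (Or.inr ⟨h20, h21, hγ, ?_, ?_⟩)
    · exact (mul_eq_zero.1 h00).resolve_left (by rw [hγ]; norm_num)
    · exact (mul_eq_zero.1 h11).resolve_left (by rw [hγ]; norm_num)
  have hsub : M 2 2 - 1 ≠ 0 := sub_ne_zero.2 hγ_ne_one
  have hadd : M 2 2 + 1 ≠ 0 := by rwa [Ne, add_eq_zero_iff_eq_neg]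
  refine Or.inl (Fin.forall_fin_succ.2 ⟨?_, Fin.forall_fin_succ.2 ⟨?_, Fin.forall_fin_one.2 ?_⟩⟩)
  · exact ⟨(mul_eq_zero.1 h00).resolve_left hsub, (mul_eq_zero.1 h01).resolve_left hadd⟩
  · exact ⟨(mul_eq_zero.1 h10).resolve_left hadd, (mul_eq_zero.1 h11).resolve_left hsub⟩
  · exact ⟨h20, h21⟩
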